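/- arXiv:math/0701666 — 5 statements merged into one kernel-verified Lean document; each statement's English description precedes it below -/
import Mathlib

section
/- Let m ≥ 2 be an integer, let V be a 2m-dimensional vector space over ℤ/2 with a fixed basis 𝒰, and let H be a subspace of V of dimension at least m. Then there exists a nonzero element α of H whose support with respect to 𝒰 (the set of basis vectors appearing with coefficient 1 in the expansion of α) has cardinality at most m. -/
/-!
Over `ℤ/2`, a coordinate lies in exactly two of the supports of `x`, `y`, `x + y` when it lies
in the support of `x` or `y`. Vanishing on `m - 2` fixed coordinates cuts `H` down by at most
`m - 2` dimensions, so `H` contains independent `x`, `y` supported in the remaining `m + 2`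
coordinates. If `x` and `y` both had more than `m` coordinates, `x + y` would have at most
`2 (m + 2) - 2 (m + 1) = 2 ≤ m`.
-/

open Finset Module

theorem Finsupp.card_support_add_add_card_support_add_card_support_le {ι : Type*}
    [DecidableEq ι] (x y : ι →₀ ZMod 2) :
    #(x + y).support + #x.support + #y.support ≤ 2 * #(x.support ∪ y.support) := by
  set U := x.support ∪ y.support
  have hsub : (x + y).support ⊆ (U \ x.support) ∪ (U \ y.support) := by
    intro u hu
    have hxy : x u + y u ≠ 0 := mem_support_iff.mp hu
    have hU : u ∈ U := support_add hu
    have : x u = 0 ∨ y u = 0 := by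
      revert hxy; generalize x u = a; generalize y u = b; revert a b; decide
    simp only [mem_union, mem_sdiff, mem_support_iff, not_not]
    tauto
  have hx : #(U \ x.support) = #U - #x.support := card_sdiff_of_subset subset_union_left
  have hy : #(U \ y.support) = #U - #y.support := card_sdiff_of_subset subset_union_right
  have hsum := (card_le_card hsub).trans (card_union_le _ _)
  have hxU : #x.support ≤ #U := card_le_card subset_union_left
  have hyU : #y.support ≤ #U := card_le_card subset_union_right
  omega

theorem exists_ne_zero_ne_zero_add_ne_zero_of_one_lt_finrank {K M : Type*} [Field K]
    [AddCommGroup M] [Module K M] (h : 1 < finrank K M) :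
    ∃ x y : M, x ≠ 0 ∧ y ≠ 0 ∧ x + y ≠ 0 := by
  have : Module.Finite K M := Module.finite_of_finrank_pos (by omega)
  obtain ⟨x, hx⟩ := finrank_pos_iff_exists_ne_zero.mp (by omega : 0 < finrank K M)
  obtain ⟨y, hxy⟩ := exists_linearIndependent_pair_of_one_lt_finrank h hx
  refine ⟨x, y, hx, by simpa using hxy.ne_zero 1, fun h0 => ?_⟩
  simpa using LinearIndependent.pair_iff.mp hxy 1 1 (by simpa using h0)

theorem Module.Basis.exists_pair_mem_repr_eq_zero {K V ι : Type*} [Field K] [AddCommGroup V]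
    [Module K V] (b : Basis ι K V) (H : Submodule K V) [FiniteDimensional K H] (T : Finset ι)
    (hT : #T + 1 < finrank K H) :
    ∃ x ∈ H, ∃ y ∈ H, x ≠ 0 ∧ y ≠ 0 ∧ x + y ≠ 0 ∧
      ∀ t ∈ T, b.repr x t = 0 ∧ b.repr y t = 0 := by
  let π : H →ₗ[K] T → K := LinearMap.pi (fun t : T => b.coord t) ∘ₗ H.subtype
  have hker : 1 < finrank K (LinearMap.ker π) := by
    have := π.finrank_range_add_finrank_ker
    have := Submodule.finrank_le (LinearMap.range π)
    rw [finrank_fintype_fun_eq_card, Fintype.card_coe] at this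
    omega
  obtain ⟨x, y, hx, hy, hxy⟩ := exists_ne_zero_ne_zero_add_ne_zero_of_one_lt_finrank hker
  have hvanish (z : LinearMap.ker π) (t : ι) (ht : t ∈ T) : b.repr (z : V) t = 0 :=
    congrFun (LinearMap.mem_ker.mp z.2) ⟨t, ht⟩
  exact ⟨x, (x : H).2, y, (y : H).2, by simpa using hx, by simpa using hy,
    by exact_mod_cast hxy, fun t ht => ⟨hvanish x t ht, hvanish y t ht⟩⟩

/-- Proposition "quality control": if `V` is a `2m`-dimensional vector space over `ℤ/2`
with basis `b` and `H` is a subspace of dimension at least `m` (`m ≥ 2`), then some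
nonzero `α ∈ H` has support of cardinality at most `m` with respect to `b`. -/
theorem stmt_0 {m : ℕ} (hm : 2 ≤ m) {V : Type*} [AddCommGroup V] [Module (ZMod 2) V]
    {ι : Type*} [Fintype ι] (b : Module.Basis ι (ZMod 2) V) (hcard : Fintype.card ι = 2 * m)
    (H : Submodule (ZMod 2) V) (hH : m ≤ Module.finrank (ZMod 2) H) :
    ∃ α ∈ H, α ≠ 0 ∧ (b.repr α).support.card ≤ m := by
  classical
  have : Module.Finite (ZMod 2) V := Module.Finite.of_basis b
  obtain ⟨T, -, hT⟩ := exists_subset_card_eq (s := (univ : Finset ι)) (n := m - 2)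
    (by rw [card_univ, hcard]; omega)
  obtain ⟨x, hxH, y, hyH, hx, hy, hxy, hvanish⟩ :=
    b.exists_pair_mem_repr_eq_zero H T (by omega)
  have hunion : (b.repr x).support ∪ (b.repr y).support ⊆ Tᶜ := by
    intro u hu
    rw [mem_compl]
    intro huT
    rcases mem_union.mp hu with hu | hu
    · exact Finsupp.mem_support_iff.mp hu (hvanish u huT).1
    · exact Finsupp.mem_support_iff.mp hu (hvanish u huT).2
  have hcount := (b.repr x).card_support_add_add_card_support_add_card_support_le (b.repr y)
  have hTc : #Tᶜ = m + 2 := by rw [card_compl, hcard, hT]; omega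
  have hU := card_le_card hunion
  by_contra! hlarge
  have hxlarge := hlarge x hxH hx
  have hylarge := hlarge y hyH hy
  have hsumlarge := hlarge (x + y) (H.add_mem hxH hyH) hxy
  rw [map_add] at hsumlarge
  omega
end

section
/- Let m ≥ 2 be an integer, let V be a 2m-dimensional ℤ/2-vector space with basis 𝒰, and let H be a subspace of dimension at least m. If some β ∈ H has support of cardinality k ≥ m+2 with respect to 𝒰, then there exists α ∈ H with 0 < ‖α‖_𝒰 ≤ m. -/
/-! Let `L` be the span of the basis vectors in the support of `β`; it has dimension `k`, so
`dim (H ⊓ L) ≥ m + k - 2m ≥ 2` and `H ⊓ L` contains some `α₁ ∉ {0, β}`. Over `ℤ/2` the supports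
of `α₁` and `α₂ = β + α₁` partition the support of `β`, so `‖α₁‖ + ‖α₂‖ = k ≤ 2m`: one of the two
nonzero vectors `α₁, α₂ ∈ H` has support of size at most `m`. -/

open Module

theorem Submodule.finrank_add_finrank_le_finrank_inf_add_finrank {K V : Type*} [DivisionRing K]
    [AddCommGroup V] [Module K V] [FiniteDimensional K V] (s t : Submodule K V) :
    finrank K s + finrank K t ≤ finrank K ↥(s ⊓ t) + finrank K V := by
  rw [← s.finrank_sup_add_finrank_inf_eq t, add_comm]
  exact Nat.add_le_add_left (Submodule.finrank_le _) _

theorem Submodule.exists_mem_notMem_span_singleton {K V : Type*} [DivisionRing K]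
    [AddCommGroup V] [Module K V] {W : Submodule K V} (hW : 2 ≤ finrank K W) (v : V) :
    ∃ x ∈ W, x ∉ K ∙ v := by
  by_contra! hle
  have : finrank K W ≤ finrank K (K ∙ v) := Submodule.finrank_mono hle
  have : finrank K (K ∙ v) ≤ 1 := (finrank_span_le_card _).trans (by simp)
  omega

theorem Module.Basis.finrank_span_image_finset {R M ι : Type*} [Ring R] [Nontrivial R]
    [StrongRankCondition R] [AddCommGroup M] [Module R M] (b : Basis ι R M) (s : Finset ι) :
    finrank R (Submodule.span R (b '' s)) = s.card := by
  have hli : LinearIndependent R (b ∘ ((↑) : s → ι)) :=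
    b.linearIndependent.comp _ Subtype.val_injective
  rw [← Fintype.card_coe s, ← finrank_span_eq_card hli, Set.range_comp, Subtype.range_coe_subtype,
    Finset.setOfPred_mem]

theorem Finsupp.card_support_add_add_card_support_of_subset {ι : Type*} {f g : ι →₀ ZMod 2}
    (hgf : g.support ⊆ f.support) : (f + g).support.card + g.support.card = f.support.card := by
  classical
  have zmod_two_add : ∀ x y : ZMod 2, (y ≠ 0 → x ≠ 0) → (x + y ≠ 0 ↔ x ≠ 0 ∧ ¬y ≠ 0) := by decide
  have hsupp : (f + g).support = f.support \ g.support := by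
    ext i
    simp only [Finsupp.mem_support_iff, Finsupp.add_apply, Finset.mem_sdiff]
    exact zmod_two_add _ _ fun hg => Finsupp.mem_support_iff.1 (hgf (Finsupp.mem_support_iff.2 hg))
  rw [hsupp, Finset.card_sdiff_of_subset hgf, Nat.sub_add_cancel (Finset.card_le_card hgf)]

theorem stmt_1_general {m : ℕ} {V : Type*} [AddCommGroup V] [Module (ZMod 2) V]
    {ι : Type*} [Fintype ι] (b : Module.Basis ι (ZMod 2) V) (hcard : Fintype.card ι = 2 * m)
    (H : Submodule (ZMod 2) V) (hH : m ≤ Module.finrank (ZMod 2) H)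
    (β : V) (hβ : β ∈ H) (k : ℕ) (hk : (b.repr β).support.card = k) (hkm : m + 2 ≤ k) :
    ∃ α ∈ H, 0 < (b.repr α).support.card ∧ (b.repr α).support.card ≤ m := by
  have := b.finiteDimensional_of_finite
  set L := Submodule.span (ZMod 2) (b '' (b.repr β).support)
  have hdim := H.finrank_add_finrank_le_finrank_inf_add_finrank L
  rw [b.finrank_span_image_finset, hk, finrank_eq_card_basis b, hcard] at hdim
  obtain ⟨α₁, ⟨hα₁H, hα₁L⟩, hα₁⟩ :=
    Submodule.exists_mem_notMem_span_singleton (W := H ⊓ L) (by omega) β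
  have hα₁ne : α₁ ≠ 0 := fun h => hα₁ (h ▸ Submodule.zero_mem _)
  have hα₂ne : β + α₁ ≠ 0 := fun h =>
    hα₁ (eq_neg_of_add_eq_zero_right h ▸ Submodule.neg_mem _ (Submodule.mem_span_singleton_self β))
  have hsum := Finsupp.card_support_add_add_card_support_of_subset
    (b.repr_support_subset_of_mem_span _ hα₁L)
  rw [← map_add, hk] at hsum
  have hk2m : k ≤ 2 * m := hk ▸ hcard ▸ Finset.card_le_univ _
  have hpos : ∀ x ≠ 0, 0 < (b.repr x).support.card := fun x hx =>
    Finset.card_pos.2 (Finsupp.support_nonempty_iff.2 (b.repr.map_ne_zero_iff.2 hx))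
  by_cases hα₁m : (b.repr α₁).support.card ≤ m
  · exact ⟨α₁, hα₁H, hpos α₁ hα₁ne, hα₁m⟩
  · exact ⟨β + α₁, H.add_mem hβ hα₁H, hpos _ hα₂ne, by omega⟩

/-- Case I of Proposition "quality control": if `V` is `2m`-dimensional over `ℤ/2` with
basis `b`, `H` a subspace of dimension at least `m` (`m ≥ 2`), and some `β ∈ H` has
support of cardinality `k ≥ m + 2`, then some `α ∈ H` satisfies `0 < ‖α‖ ≤ m`. -/
theorem stmt_1 {m : ℕ} (hm : 2 ≤ m) {V : Type*} [AddCommGroup V] [Module (ZMod 2) V]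
    {ι : Type*} [Fintype ι] (b : Module.Basis ι (ZMod 2) V) (hcard : Fintype.card ι = 2 * m)
    (H : Submodule (ZMod 2) V) (hH : m ≤ Module.finrank (ZMod 2) H)
    (β : V) (hβ : β ∈ H) (k : ℕ) (hk : (b.repr β).support.card = k) (hkm : m + 2 ≤ k) :
    ∃ α ∈ H, 0 < (b.repr α).support.card ∧ (b.repr α).support.card ≤ m :=
  stmt_1_general b hcard H hH β hβ k hk hkm
end

section
/- Let m ≥ 1 and let H be a subspace of a ℤ/2-vector space V with basis 𝒰 such that every nonzero element of H has support of cardinality exactly m+1 with respect to 𝒰. Then for any two distinct nonzero elements α, β of H, |S_𝒰(α) ∩ S_𝒰(β)| = (m+1)/2; in particular, if H contains two distinct nonzero elements then m is odd. -/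
/-!
Over `ℤ/2` the support of `α + β` is the symmetric difference of the supports of `α` and `β`,
so `|S(α + β)| = |S(α)| + |S(β)| - 2 |S(α) ∩ S(β)|`. For distinct nonzero `α, β ∈ H` the sum
`α + β` is again a nonzero element of `H`, so all three supports have `m + 1` elements and
`2 |S(α) ∩ S(β)| = m + 1`.
-/

open Finset
open scoped symmDiff

theorem Finsupp.support_add_eq_symmDiff_of_zmod_two {ι : Type*} [DecidableEq ι]
    (f g : ι →₀ ZMod 2) : (f + g).support = f.support ∆ g.support := by
  ext i
  simp only [Finsupp.mem_support_iff, mem_symmDiff, Finsupp.add_apply]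
  generalize f i = a
  generalize g i = c
  revert a c
  decide

theorem Finset.card_symmDiff_add_two_mul_card_inter {α : Type*} [DecidableEq α]
    (s t : Finset α) : #(s ∆ t) + 2 * #(s ∩ t) = #s + #t := by
  rw [symmDiff_eq_sup_sdiff_inf, sup_eq_union, inf_eq_inter,
    card_sdiff_of_subset inter_subset_union, ← card_union_add_card_inter]
  have := card_le_card (inter_subset_union : s ∩ t ⊆ s ∪ t)
  omega

theorem Module.Basis.two_mul_card_support_inter_of_card_support_eq {V ι : Type*}
    [AddCommGroup V] [Module (ZMod 2) V] [DecidableEq ι] (b : Module.Basis ι (ZMod 2) V)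
    {α β : V} {k : ℕ} (hα : #(b.repr α).support = k) (hβ : #(b.repr β).support = k)
    (hαβ : #(b.repr (α + β)).support = k) :
    2 * #((b.repr α).support ∩ (b.repr β).support) = k := by
  have := card_symmDiff_add_two_mul_card_inter (b.repr α).support (b.repr β).support
  rw [← Finsupp.support_add_eq_symmDiff_of_zmod_two, ← map_add] at this
  omega

theorem stmt_3_general {m : ℕ} {V : Type*} [AddCommGroup V] [Module (ZMod 2) V]
    {ι : Type*} [DecidableEq ι] (b : Module.Basis ι (ZMod 2) V)
    (H : Submodule (ZMod 2) V)
    (hsupp : ∀ α ∈ H, α ≠ 0 → (b.repr α).support.card = m + 1) :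
    (∀ α ∈ H, ∀ β ∈ H, α ≠ 0 → β ≠ 0 → α ≠ β →
      ((((b.repr α).support ∩ (b.repr β).support).card : ℚ) = (m + 1) / 2)) ∧
    ((∃ α ∈ H, ∃ β ∈ H, α ≠ 0 ∧ β ≠ 0 ∧ α ≠ β) → Odd m) := by
  have key : ∀ α ∈ H, ∀ β ∈ H, α ≠ 0 → β ≠ 0 → α ≠ β →
      2 * #((b.repr α).support ∩ (b.repr β).support) = m + 1 := by
    intro α hα β hβ hα0 hβ0 hne
    have hsum : α + β ≠ 0 := ZModModule.sub_eq_add α β ▸ sub_ne_zero.mpr hne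
    exact b.two_mul_card_support_inter_of_card_support_eq (hsupp α hα hα0) (hsupp β hβ hβ0)
      (hsupp _ (H.add_mem hα hβ) hsum)
  refine ⟨fun α hα β hβ hα0 hβ0 hne ↦ ?_, fun ⟨α, hα, β, hβ, hα0, hβ0, hne⟩ ↦ ?_⟩
  · rw [eq_div_iff two_ne_zero, mul_comm]
    exact_mod_cast key α hα β hβ hα0 hβ0 hne
  · have := key α hα β hβ hα0 hβ0 hne
    exact ⟨#((b.repr α).support ∩ (b.repr β).support) - 1, by omega⟩

/-- If every nonzero element of a subspace `H` of a `ℤ/2`-vector space with basis `b`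
has support of cardinality exactly `m + 1` (`m ≥ 1`), then the supports of any two
distinct nonzero elements of `H` intersect in exactly `(m+1)/2` elements; in particular
if `H` contains two distinct nonzero elements then `m` is odd. -/
theorem stmt_3 {m : ℕ} (hm : 1 ≤ m) {V : Type*} [AddCommGroup V] [Module (ZMod 2) V]
    {ι : Type*} [DecidableEq ι] (b : Module.Basis ι (ZMod 2) V)
    (H : Submodule (ZMod 2) V)
    (hsupp : ∀ α ∈ H, α ≠ 0 → (b.repr α).support.card = m + 1) :
    (∀ α ∈ H, ∀ β ∈ H, α ≠ 0 → β ≠ 0 → α ≠ β →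
      ((((b.repr α).support ∩ (b.repr β).support).card : ℚ) = (m + 1) / 2)) ∧
    ((∃ α ∈ H, ∃ β ∈ H, α ≠ 0 ∧ β ≠ 0 ∧ α ≠ β) → Odd m) :=
  stmt_3_general b H hsupp
end

section
/- (Fisher's inequality) Let n and k be positive integers, let 𝒰 be a finite set of cardinality n, and let 𝒳 be a collection of subsets of 𝒰 such that |S ∩ T| = k for all distinct S, T ∈ 𝒳. Then |𝒳| ≤ n. -/
/-! The indicator vectors `1_S ∈ ℝ^U`, `S ∈ X`, are linearly independent. If `∑ g_S • 1_S = 0`,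
expanding its squared norm gives `0 = k (∑ g_S)² + ∑ g_S² (|S| - k)`. Every `|S| ≥ k`, and at most
one `S` has `|S| = k`, so `∑ g_S = 0` and `g_S = 0` for all other `S`, hence for all `S`. -/

open Finset RealInnerProductSpace

section InnerConst

variable {E ι : Type*} [NormedAddCommGroup E] [InnerProductSpace ℝ E] [Fintype ι]
  {v : ι → E} {k : ℝ}

theorem norm_sum_smul_sq_of_inner_eq_const (hinner : Pairwise fun i j => ⟪v i, v j⟫ = k) (g : ι → ℝ) :
    ‖∑ i, g i • v i‖ ^ 2 = k * (∑ i, g i) ^ 2 + ∑ i, g i ^ 2 * (‖v i‖ ^ 2 - k) := by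
  classical
  have hgram : ∀ i j, ⟪v i, v j⟫ = k + if i = j then ‖v i‖ ^ 2 - k else 0 := by
    intro i j
    by_cases h : i = j
    · subst h; simp
    · simp [h, hinner h]
  rw [← real_inner_self_eq_norm_sq, sq, sum_mul_sum, mul_sum]
  simp_rw [sum_inner, inner_sum, real_inner_smul_left, real_inner_smul_right, hgram, mul_sum,
    mul_add, sum_add_distrib, mul_ite, mul_zero, sum_ite_eq, if_pos (mem_univ _)]
  congr 1
  · exact sum_congr rfl fun i _ => sum_congr rfl fun j _ => by ring
  · exact sum_congr rfl fun i _ => by ring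

theorem linearIndependent_of_inner_eq_const (hk : 0 < k) (hv : Function.Injective v)
    (hinner : Pairwise fun i j => ⟪v i, v j⟫ = k) (hnorm : ∀ i, k ≤ ‖v i‖ ^ 2) :
    LinearIndependent ℝ v := by
  classical
  have huniq : ∀ i j, ‖v i‖ ^ 2 = k → ‖v j‖ ^ 2 = k → i = j := by
    intro i j hi hj
    by_contra hij
    have : ‖v i - v j‖ ^ 2 = 0 := by rw [norm_sub_sq_real, hinner hij, hi, hj]; ring
    exact hij (hv (sub_eq_zero.mp (by simpa using this)))
  rw [Fintype.linearIndependent_iff]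
  intro g hg
  have hterm : ∀ i, 0 ≤ g i ^ 2 * (‖v i‖ ^ 2 - k) :=
    fun i => mul_nonneg (sq_nonneg _) (sub_nonneg.mpr (hnorm i))
  have hzero : k * (∑ i, g i) ^ 2 + ∑ i, g i ^ 2 * (‖v i‖ ^ 2 - k) = 0 := by
    rw [← norm_sum_smul_sq_of_inner_eq_const hinner, hg, norm_zero, sq, zero_mul]
  obtain ⟨hsum, hdiag⟩ := (add_eq_zero_iff_of_nonneg (by positivity)
    (sum_nonneg fun i _ => hterm i)).mp hzero
  replace hsum : ∑ i, g i = 0 := by simpa [hk.ne'] using hsum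
  have hlong : ∀ i, ‖v i‖ ^ 2 ≠ k → g i = 0 := by
    intro i hi
    have hi' : ‖v i‖ ^ 2 - k ≠ 0 := sub_ne_zero.mpr hi
    simpa [hi'] using (sum_eq_zero_iff_of_nonneg fun i _ => hterm i).mp hdiag i (mem_univ i)
  intro i
  by_cases hi : ‖v i‖ ^ 2 = k
  · rw [← hsum, sum_eq_single i (fun j _ hji => hlong j fun hj => hji (huniq j i hj hi))
      (by simp)]
  · exact hlong i hi

end InnerConst

section IndicatorVec

variable {γ : Type*} [DecidableEq γ]

def indicatorVec (U S : Finset γ) : EuclideanSpace ℝ U :=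
  WithLp.toLp 2 fun x => if (x : γ) ∈ S then 1 else 0

theorem inner_indicatorVec {U S : Finset γ} (hS : S ⊆ U) (T : Finset γ) :
    ⟪indicatorVec U S, indicatorVec U T⟫ = (S ∩ T).card := by
  simp only [PiLp.inner_apply, indicatorVec, RCLike.inner_apply', conj_trivial, ite_mul, one_mul,
    zero_mul, ← ite_and]
  rw [sum_coe_sort U fun x => if x ∈ S ∧ x ∈ T then (1 : ℝ) else 0, sum_boole]
  congr 2
  ext x
  simp only [mem_filter, mem_inter]
  exact ⟨fun h => h.2, fun h => ⟨hS h.1, h⟩⟩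

theorem norm_indicatorVec_sq {U S : Finset γ} (hS : S ⊆ U) :
    ‖indicatorVec U S‖ ^ 2 = S.card := by
  rw [← real_inner_self_eq_norm_sq, inner_indicatorVec hS, inter_self]

theorem indicatorVec_injOn (U : Finset γ) : Set.InjOn (indicatorVec U) {S | S ⊆ U} := by
  intro S hS T hT h
  have key : ∀ x : U, (x : γ) ∈ S ↔ (x : γ) ∈ T := by
    intro x
    have hx := congrFun (congrArg WithLp.ofLp h) x
    simp only [indicatorVec] at hx
    split_ifs at hx <;> simp_all
  ext x
  exact ⟨fun hx => (key ⟨x, hS hx⟩).1 hx, fun hx => (key ⟨x, hT hx⟩).2 hx⟩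

end IndicatorVec

/-- Fisher's inequality: if `𝒰` is a finite set of cardinality `n` and `𝒳` is a family
of subsets of `𝒰` such that any two distinct members of `𝒳` intersect in exactly `k`
elements (`n, k ≥ 1`), then `|𝒳| ≤ n`. -/
theorem stmt_4 {γ : Type*} [DecidableEq γ] (n k : ℕ) (hn : 1 ≤ n) (hk : 1 ≤ k)
    (U : Finset γ) (hU : U.card = n) (X : Finset (Finset γ))
    (hsub : ∀ S ∈ X, S ⊆ U)
    (hint : ∀ S ∈ X, ∀ T ∈ X, S ≠ T → (S ∩ T).card = k) :
    X.card ≤ n := by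
  rcases le_or_gt X.card 1 with hX | hX
  · exact hX.trans hn
  have hsize : ∀ S ∈ X, k ≤ S.card := by
    intro S hS
    obtain ⟨T, hT, hTS⟩ := exists_mem_ne hX S
    exact hint S hS T hT hTS.symm ▸ card_le_card inter_subset_left
  let v : X → EuclideanSpace ℝ U := fun S => indicatorVec U S
  have hv : LinearIndependent ℝ v := by
    refine linearIndependent_of_inner_eq_const (k := k) (by positivity) ?_ ?_ ?_
    · exact fun S T h => Subtype.ext (indicatorVec_injOn U (hsub S S.2) (hsub T T.2) h)
    · intro S T hST
      simp only [v, inner_indicatorVec (hsub S S.2), hint S S.2 T T.2 (Subtype.coe_ne_coe.mpr hST)]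
    · intro S
      simp only [v, norm_indicatorVec_sq (hsub S S.2)]
      exact_mod_cast hsize S S.2
  calc X.card = Fintype.card X := (Fintype.card_coe X).symm
    _ ≤ Module.finrank ℝ (EuclideanSpace ℝ U) := hv.fintype_card_le_finrank
    _ = n := by rw [finrank_euclideanSpace, Fintype.card_coe, hU]
end

section
/- Let m ≥ 2 and let V be a 2m-dimensional ℤ/2-vector space with basis 𝒰. There is no m-dimensional subspace H of V such that every nonzero element of H has support of cardinality exactly m+1 with respect to 𝒰. -/
/-!
Count the pairs `(α, i)` with `α ∈ H` and `α_i ≠ 0`. By hypothesis there are `(2^m - 1)(m + 1)`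
of them. For each coordinate `i`, the functional `α ↦ α_i` on `H` is either zero or takes the
value `1` on exactly half of `H`, so there are at most `2m · 2^(m-1)` of them. Hence `2^m ≤ m + 1`,
which is impossible for `m ≥ 2`.
-/

open Finset

theorem AddMonoidHom.two_mul_card_ne_zero_le {G : Type*} [AddGroup G] [Fintype G]
    (f : G →+ ZMod 2) : 2 * #{x | f x ≠ 0} ≤ Fintype.card G := by
  classical
  have hne : ∀ x, f x ≠ 0 ↔ f x = 1 := fun x => by generalize f x = z; decide +revert
  have hne' : ∀ x, f x ≠ 1 ↔ f x = 0 := fun x => by generalize f x = z; decide +revert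
  simp only [hne]
  by_cases hy : 1 ∈ Set.range f
  · have hfiber := AddMonoidHom.card_fiber_eq_of_mem_range f ⟨0, map_zero f⟩ hy
    have hsplit := card_filter_add_card_filter_not (s := univ) (fun x => f x = 1)
    simp only [hne', card_univ] at hsplit
    omega
  · simp_all

theorem AddMonoidHom.two_mul_sum_card_support_le {G ι : Type*} [AddGroup G] [Fintype G]
    [Fintype ι] (φ : G →+ ι →₀ ZMod 2) :
    2 * ∑ x, (φ x).support.card ≤ Fintype.card ι * Fintype.card G := by
  classical
  have hsupport : ∀ x, (φ x).support.card = #{i | φ x i ≠ 0} := fun x => by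
    congr 1; ext i; simp
  calc 2 * ∑ x, (φ x).support.card = ∑ i, 2 * #{x | φ x i ≠ 0} := by
        simp only [hsupport, card_filter, mul_sum]
        rw [sum_comm]
    _ ≤ ∑ _i : ι, Fintype.card G :=
        sum_le_sum fun i _ => ((Finsupp.applyAddHom i).comp φ).two_mul_card_ne_zero_le
    _ = Fintype.card ι * Fintype.card G := by simp

/-- Case II of Proposition "quality control": if `V` is a `2m`-dimensional `ℤ/2`-vector
space with basis `b` (`m ≥ 2`), there is no `m`-dimensional subspace `H` of `V` all of
whose nonzero elements have support of cardinality exactly `m + 1`. -/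
theorem stmt_6 {m : ℕ} (hm : 2 ≤ m) {V : Type*} [AddCommGroup V] [Module (ZMod 2) V]
    {ι : Type*} [Fintype ι] (b : Module.Basis ι (ZMod 2) V) (hcard : Fintype.card ι = 2 * m) :
    ¬ ∃ H : Submodule (ZMod 2) V, Module.finrank (ZMod 2) H = m ∧
      ∀ α ∈ H, α ≠ 0 → (b.repr α).support.card = m + 1 := by
  classical
  rintro ⟨H, hH, hsupp⟩
  let _ : Fintype V := Module.fintypeOfFintype b
  have hcardH : Fintype.card H = 2 ^ m := by
    rw [Module.card_eq_pow_finrank (K := ZMod 2) (V := H), ZMod.card, hH]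
  have hsum : ∑ x : H, (b.repr x).support.card = (2 ^ m - 1) * (m + 1) := by
    rw [← sum_erase (univ : Finset H) (a := 0) (by simp), sum_const_nat (m := m + 1),
      card_erase_of_mem (mem_univ 0), card_univ, hcardH]
    intro x hx
    exact hsupp x x.2 (by simpa using hx)
  have hbound : 2 * ∑ x : H, (b.repr x).support.card ≤ Fintype.card ι * Fintype.card H :=
    (b.repr.toAddMonoidHom.comp H.subtype.toAddMonoidHom).two_mul_sum_card_support_le
  rw [hsum, hcard, hcardH] at hbound
  have hpow : m + 1 < 2 ^ m := by
    have := Nat.lt_two_pow_self (n := m - 1)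
    rw [show m = m - 1 + 1 by omega, pow_succ]
    omega
  have hpos : 1 ≤ 2 ^ m := Nat.one_le_two_pow
  zify [hpos] at hbound hpow
  nlinarith
end
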